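/- Let α ≥ 0, d > 0, k > 0, γ > 0, c > 0. Then there exists a unique λ > 0 such that c / (γ 2^α d^{(α+1)/2}) = λ^{α+1} M(α/2 + 1/2, 1/2, λ²). -/

import Mathlib

/-!
The right-hand side `F(l) = l ^ (α + 1) * M(α/2 + 1/2, 1/2, l²)` is continuous and strictly
increasing on `(0, ∞)`, tends to `0` at `0⁺` and to `∞` at `∞`, so it takes every positive value
exactly once. Continuity of `M` comes from the coefficient bound
`(a)ₛ / ((b)ₛ s!) ≤ max 1 (a / b) ^ s / s!`, which dominates the Kummer series by an exponential
series locally uniformly.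
-/

open Real Filter Topology

/-- The Kummer confluent hypergeometric function `M(a,b,z)`, defined by its power series. -/
noncomputable def kummerM (a b z : ℝ) : ℝ :=
  ∑' s : ℕ, ((ascPochhammer ℝ s).eval a / ((ascPochhammer ℝ s).eval b * (Nat.factorial s : ℝ)))
      * z ^ s

open Set Nat

noncomputable def kummerCoeff (a b : ℝ) (s : ℕ) : ℝ :=
  (ascPochhammer ℝ s).eval a / ((ascPochhammer ℝ s).eval b * (s ! : ℝ))

theorem kummerM_eq_tsum (a b z : ℝ) : kummerM a b z = ∑' s, kummerCoeff a b s * z ^ s := rfl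

section KummerCoeff

variable {a b : ℝ}

theorem kummerCoeff_pos (ha : 0 < a) (hb : 0 < b) (s : ℕ) : 0 < kummerCoeff a b s :=
  div_pos (ascPochhammer_pos _ _ ha) (mul_pos (ascPochhammer_pos _ _ hb) (by positivity))

theorem kummerCoeff_succ (hb : 0 < b) (s : ℕ) :
    kummerCoeff a b (s + 1) = kummerCoeff a b s * ((a + s) / ((b + s) * (s + 1))) := by
  have : (ascPochhammer ℝ s).eval b ≠ 0 := (ascPochhammer_pos _ _ hb).ne'
  have : b + s ≠ 0 := by positivity
  simp only [kummerCoeff, ascPochhammer_succ_right, Polynomial.eval_mul, Polynomial.eval_add,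
    Polynomial.eval_X, Polynomial.eval_natCast, factorial_succ, cast_mul, cast_add, cast_one]
  field_simp

theorem kummerCoeff_le (ha : 0 < a) (hb : 0 < b) (s : ℕ) :
    kummerCoeff a b s ≤ max 1 (a / b) ^ s / s ! := by
  induction s with
  | zero => simp [kummerCoeff]
  | succ s ih =>
    set c := max 1 (a / b)
    have hratio : (a + s) / (b + s) ≤ c := by
      rw [div_le_iff₀ (by positivity)]
      have : a ≤ c * b := (div_le_iff₀ hb).1 (le_max_right _ _)
      nlinarith [le_max_left 1 (a / b), s.cast_nonneg (α := ℝ)]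
    calc kummerCoeff a b (s + 1)
        = kummerCoeff a b s * ((a + s) / (b + s)) / (s + 1) := by
          rw [kummerCoeff_succ hb]; field_simp
      _ ≤ c ^ s / s ! * c / (s + 1) := by gcongr
      _ = c ^ (s + 1) / (s + 1)! := by
          rw [factorial_succ, cast_mul, pow_succ]; push_cast; field_simp

theorem norm_kummerCoeff_mul_pow_le (ha : 0 < a) (hb : 0 < b) {z R : ℝ} (hz : |z| ≤ R)
    (s : ℕ) : ‖kummerCoeff a b s * z ^ s‖ ≤ (max 1 (a / b) * R) ^ s / s ! := by
  rw [norm_mul, norm_pow, Real.norm_of_nonneg (kummerCoeff_pos ha hb s).le, mul_pow,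
    mul_div_right_comm]
  gcongr
  · exact kummerCoeff_le ha hb s
  · exact hz

theorem summable_kummerCoeff_mul_pow (ha : 0 < a) (hb : 0 < b) (z : ℝ) :
    Summable (fun s ↦ kummerCoeff a b s * z ^ s) :=
  .of_norm_bounded (Real.summable_pow_div_factorial _)
    (norm_kummerCoeff_mul_pow_le ha hb le_rfl)

end KummerCoeff

section KummerM

variable {a b : ℝ}

theorem continuous_kummerM (ha : 0 < a) (hb : 0 < b) : Continuous (kummerM a b) := by
  refine continuous_iff_continuousAt.2 fun z ↦ ?_
  have hcont : ContinuousOn (kummerM a b) (Icc (-(|z| + 1)) (|z| + 1)) :=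
    continuousOn_tsum (fun s ↦ by fun_prop) (Real.summable_pow_div_factorial _)
      fun s x hx ↦ norm_kummerCoeff_mul_pow_le ha hb (abs_le.2 hx) s
  exact hcont.continuousAt
    (Icc_mem_nhds (by linarith [neg_abs_le z]) (by linarith [le_abs_self z]))

theorem kummerM_zero (a b : ℝ) : kummerM a b 0 = 1 := by
  rw [kummerM_eq_tsum, tsum_eq_single 0 fun s hs ↦ by simp [hs]]
  simp [kummerCoeff]

theorem kummerM_monotoneOn (ha : 0 < a) (hb : 0 < b) : MonotoneOn (kummerM a b) (Ici 0) :=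
  fun x hx y _ hxy ↦ (summable_kummerCoeff_mul_pow ha hb x).tsum_le_tsum
    (fun s ↦ by have := kummerCoeff_pos ha hb s; have : (0:ℝ) ≤ x := hx; gcongr)
    (summable_kummerCoeff_mul_pow ha hb y)

theorem one_le_kummerM (ha : 0 < a) (hb : 0 < b) {z : ℝ} (hz : 0 ≤ z) : 1 ≤ kummerM a b z :=
  kummerM_zero a b ▸ kummerM_monotoneOn ha hb self_mem_Ici hz hz

end KummerM

section Profile

variable {p a b : ℝ}

theorem strictMonoOn_rpow_mul_kummerM (hp : 0 < p) (ha : 0 < a) (hb : 0 < b) :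
    StrictMonoOn (fun l ↦ l ^ p * kummerM a b (l ^ 2)) (Ioi 0) := by
  intro x (hx : 0 < x) y (hy : 0 < y) hxy
  have hrpow : x ^ p < y ^ p := rpow_lt_rpow hx.le hxy hp
  have hM : kummerM a b (x ^ 2) ≤ kummerM a b (y ^ 2) :=
    kummerM_monotoneOn ha hb (sq_nonneg x) (sq_nonneg y) (by gcongr)
  have hM_pos : 0 < kummerM a b (x ^ 2) := one_pos.trans_le (one_le_kummerM ha hb (sq_nonneg x))
  calc x ^ p * kummerM a b (x ^ 2) < y ^ p * kummerM a b (x ^ 2) := by gcongr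
    _ ≤ y ^ p * kummerM a b (y ^ 2) := by gcongr

theorem continuousOn_rpow_mul_kummerM (ha : 0 < a) (hb : 0 < b) :
    ContinuousOn (fun l ↦ l ^ p * kummerM a b (l ^ 2)) (Ioi 0) := by
  refine .mul (fun x hx ↦ ?_) (continuous_kummerM ha hb |>.comp_continuousOn (by fun_prop))
  exact (continuousAt_rpow_const x p (.inl (ne_of_gt hx))).continuousWithinAt

theorem tendsto_rpow_mul_kummerM_nhdsGT_zero (hp : 0 < p) (ha : 0 < a) (hb : 0 < b) :
    Tendsto (fun l ↦ l ^ p * kummerM a b (l ^ 2)) (𝓝[>] 0) (𝓝 0) := by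
  have hrpow : Tendsto (fun l : ℝ ↦ l ^ p) (𝓝[>] 0) (𝓝 0) := by
    simpa [zero_rpow hp.ne'] using
      ((continuousAt_rpow_const 0 p (.inr hp.le)).tendsto).mono_left nhdsWithin_le_nhds
  have hM : Tendsto (fun l ↦ kummerM a b (l ^ 2)) (𝓝[>] 0) (𝓝 1) :=
    (((continuous_kummerM ha hb).comp (continuous_pow 2)).tendsto' 0 1
      (by simp [kummerM_zero])).mono_left nhdsWithin_le_nhds
  simpa using hrpow.mul hM

theorem tendsto_rpow_mul_kummerM_atTop (hp : 0 < p) (ha : 0 < a) (hb : 0 < b) :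
    Tendsto (fun l ↦ l ^ p * kummerM a b (l ^ 2)) atTop atTop := by
  refine tendsto_atTop_mono' _ ?_ (tendsto_rpow_atTop hp)
  filter_upwards [eventually_ge_atTop 0] with l hl
  exact le_mul_of_one_le_right (by positivity) (one_le_kummerM ha hb (sq_nonneg l))

end Profile

theorem existsUnique_pos_eq_of_strictMonoOn {f : ℝ → ℝ} (hmono : StrictMonoOn f (Ioi 0))
    (hcont : ContinuousOn f (Ioi 0)) (h0 : Tendsto f (𝓝[>] 0) (𝓝 0))
    (htop : Tendsto f atTop atTop) {C : ℝ} (hC : 0 < C) : ∃! l, 0 < l ∧ f l = C := by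
  obtain ⟨ε, hfε, hε⟩ := ((h0.eventually (gt_mem_nhds hC)).and self_mem_nhdsWithin).exists
  obtain ⟨R, hfR, hεR⟩ :=
    ((htop.eventually (eventually_ge_atTop C)).and (eventually_ge_atTop ε)).exists
  obtain ⟨l, hl, hfl⟩ := intermediate_value_Icc hεR (hcont.mono fun x hx ↦ lt_of_lt_of_le hε hx.1)
    ⟨hfε.le, hfR⟩
  have hl : 0 < l := lt_of_lt_of_le hε hl.1
  exact ⟨l, ⟨hl, hfl⟩, fun y ⟨hy, hfy⟩ ↦ hmono.injOn hy hl (hfy.trans hfl.symm)⟩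

theorem exists_unique_lambda_P3_general (α d γ c : ℝ)
    (hα : 0 ≤ α) (hd : 0 < d) (hγ : 0 < γ) (hc : 0 < c) :
    ∃! l : ℝ, 0 < l ∧
      c / (γ * 2 ^ α * d ^ ((α + 1) / 2))
        = l ^ (α + 1) * kummerM (α / 2 + 1 / 2) (1 / 2) (l ^ 2) := by
  have hp : 0 < α + 1 := by linarith
  have ha : 0 < α / 2 + 1 / 2 := by linarith
  have hb : (0 : ℝ) < 1 / 2 := by norm_num
  have hC : 0 < c / (γ * 2 ^ α * d ^ ((α + 1) / 2)) := by positivity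
  simpa only [eq_comm (a := c / _)] using existsUnique_pos_eq_of_strictMonoOn
    (strictMonoOn_rpow_mul_kummerM hp ha hb) (continuousOn_rpow_mul_kummerM ha hb)
    (tendsto_rpow_mul_kummerM_nhdsGT_zero hp ha hb) (tendsto_rpow_mul_kummerM_atTop hp ha hb) hC

/-- unique free-boundary coefficient for the flux problem (P3). -/
theorem exists_unique_lambda_P3 (α d k γ c : ℝ)
    (hα : 0 ≤ α) (hd : 0 < d) (hk : 0 < k) (hγ : 0 < γ) (hc : 0 < c) :
    ∃! l : ℝ, 0 < l ∧
      c / (γ * 2 ^ α * d ^ ((α + 1) / 2))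
        = l ^ (α + 1) * kummerM (α / 2 + 1 / 2) (1 / 2) (l ^ 2) :=
  exists_unique_lambda_P3_general α d γ c hα hd hγ hc
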